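/- Let 1 ≤ k ≤ m, suppose every edge of G is contained in at most Δ_E triangles with Δ_E ≥ 1, let p = 1/√(km) and q = √(k/m), let (g_v)_{v ∈ V} be independent Bernoulli(p) and (h_{(u,v)})_{(u,v) ∈ V × V} be independent Bernoulli(q) random variables, jointly independent, and let X = Σ_{(u,v,w) canonically ordered triangle} t^{>k}_{uvw} · g_u · h_{(u,v)} · h_{(u,w)}. Then Var(X) ≤ 4 (√k / m^{3/2}) Δ_E T^{>k}. -/

import Mathlib

open MeasureTheory ProbabilityTheory

/-- The (0-indexed) position of the edge `e` in the stream `σ`; junk value `0` if `e` does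
not occur.  When `σ` is injective this is the unique `i` with `σ i = e`. -/
noncomputable def pos {V : Type*} [DecidableEq V] {m : ℕ} (σ : Fin m → Sym2 V) (e : Sym2 V) : ℕ :=
  if h : ∃ i, σ i = e then (h.choose : ℕ) else 0

/-- `degb σ u v w` is the number of edges incident to `v` arriving strictly between the
edges `uv` and `vw` in the stream `σ`. -/
noncomputable def degb {V : Type*} [DecidableEq V] {m : ℕ}
    (σ : Fin m → Sym2 V) (u v w : V) : ℕ :=
  (Finset.univ.filter (fun t : Fin m =>
    pos σ s(u, v) < (t : ℕ) ∧ (t : ℕ) < pos σ s(v, w) ∧ v ∈ σ t)).card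

/-- The degree of the vertex `v` in the streamed graph: the number of stream edges
incident to `v`. -/
def vdeg {V : Type*} [DecidableEq V] {m : ℕ} (σ : Fin m → Sym2 V) (v : V) : ℕ :=
  (Finset.univ.filter (fun t : Fin m => v ∈ σ t)).card

/-- `(u, v, w)` is a canonically ordered triangle of the streamed graph if the edges
`uv`, `uw`, `vw` all occur in the stream and `uv ≼ uw ≼ vw`. -/
def IsCanonTri {V : Type*} [DecidableEq V] {m : ℕ} (σ : Fin m → Sym2 V) (u v w : V) : Prop :=
  s(u, v) ∈ Set.range σ ∧ s(u, w) ∈ Set.range σ ∧ s(v, w) ∈ Set.range σ ∧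
    pos σ s(u, v) ≤ pos σ s(u, w) ∧ pos σ s(u, w) ≤ pos σ s(v, w)

open scoped Classical in
/-- `t^{<k}_{uvw}`: the weight `(1 − 1/k)^{degb(uvw) + degb(uwv)}` if `(u,v,w)` is a
canonically ordered triangle, and `0` otherwise. -/
noncomputable def tlt {V : Type*} [DecidableEq V] {m : ℕ} (σ : Fin m → Sym2 V) (k : ℝ)
    (u v w : V) : ℝ :=
  if IsCanonTri σ u v w then (1 - 1 / k) ^ (degb σ u v w + degb σ u w v) else 0

open scoped Classical in
/-- `t^{>k}_{uvw}`: the weight `1 − (1 − 1/k)^{degb(uvw) + degb(uwv)}` if `(u,v,w)` is a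
canonically ordered triangle, and `0` otherwise. -/
noncomputable def tgt {V : Type*} [DecidableEq V] {m : ℕ} (σ : Fin m → Sym2 V) (k : ℝ)
    (u v w : V) : ℝ :=
  if IsCanonTri σ u v w then 1 - (1 - 1 / k) ^ (degb σ u v w + degb σ u w v) else 0

/-!
Write `X = ∑_T t_T Y_T` with `Y_T = g_u h_{(u,v)} h_{(u,w)}`, a product of independent Bernoulli
variables, so that `Var X = ∑_{T,T'} t_T t_{T'} Cov(Y_T, Y_{T'})`; the covariance vanishes unless
`T` and `T'` have the same apex `u`. Fix a canonical `T = (u,v,w)`. The canonical `T'` at apex `u`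
meeting `{v, w}` number at most `2 Δ_E` and each contributes at most `p q²`. Every other `T'` reads
two `h`-variables not read by `T`, so contributes at most `p q⁴ t_{T'}`; and
`∑_{v',w'} t_{uv'w'} ≤ 2 Δ_E m / k` since `1 - (1 - 1/k)^n ≤ n/k` and a stream edge is counted in
`degb` by at most `2 Δ_E` canonical triangles at `u` (only one orientation of each is canonical).
As `q² = k/m`, both contributions are `2 Δ_E p q² = 2 Δ_E √k / m^{3/2}`.
-/

open Finset

open scoped Classical

theorem Finset.prod_mul_prod_eq_prod_union_of_mul_self {ι M : Type*} [CommMonoid M]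
    [DecidableEq ι] {f : ι → M} (hf : ∀ i, f i * f i = f i) (s t : Finset ι) :
    (∏ i ∈ s, f i) * ∏ i ∈ t, f i = ∏ i ∈ s ∪ t, f i := by
  have hidem : (∏ i ∈ s ∩ t, f i) * ∏ i ∈ s ∩ t, f i = ∏ i ∈ s ∩ t, f i := by
    rw [← prod_mul_distrib]; exact prod_congr rfl fun i _ => hf i
  rw [← prod_union_inter, ← prod_sdiff (inter_subset_union : s ∩ t ⊆ s ∪ t), mul_assoc, hidem]

theorem Finset.prod_triple_of_mul_self {ι M : Type*} [CommMonoid M] [DecidableEq ι]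
    {f : ι → M} (hf : ∀ i, f i * f i = f i) (a b c : ι) :
    ∏ i ∈ {a, b, c}, f i = f a * f b * f c := by
  rw [insert_eq, insert_eq, ← prod_mul_prod_eq_prod_union_of_mul_self hf,
    ← prod_mul_prod_eq_prod_union_of_mul_self hf]
  simp only [prod_singleton, mul_assoc]

def bernoulliCov {ι : Type*} [DecidableEq ι] (e : ι → ℝ) (s t : Finset ι) : ℝ :=
  (∏ i ∈ s ∪ t, e i) - (∏ i ∈ s, e i) * ∏ i ∈ t, e i

lemma bernoulliCov_le {ι : Type*} [DecidableEq ι] {e : ι → ℝ}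
    (he0 : ∀ i, 0 ≤ e i) (he1 : ∀ i, e i ≤ 1) {r s t : Finset ι} (hr : r ⊆ s ∪ t) :
    bernoulliCov e s t ≤ ∏ i ∈ r, e i := by
  have hmono := prod_le_prod_of_subset_of_le_one hr (fun i _ => he0 i) fun i _ _ => he1 i
  have hnonneg := mul_nonneg (prod_nonneg fun i (_ : i ∈ s) => he0 i)
    (prod_nonneg fun i (_ : i ∈ t) => he0 i)
  unfold bernoulliCov
  linarith

lemma bernoulliCov_eq_zero {ι : Type*} [DecidableEq ι] (e : ι → ℝ) {s t : Finset ι}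
    (hst : Disjoint s t) : bernoulliCov e s t = 0 := by
  rw [bernoulliCov, prod_union hst, sub_self]

lemma inv_sqrt_mul_mul_div_eq {k m : ℝ} (hk : 0 < k) (hm : 0 < m) :
    (Real.sqrt (k * m))⁻¹ * (k / m) = Real.sqrt k / m ^ (3 / 2 : ℝ) := by
  have h32 : m ^ (3 / 2 : ℝ) = m * Real.sqrt m := by
    rw [show (3 / 2 : ℝ) = 1 + 1 / 2 by norm_num, Real.rpow_add hm, Real.rpow_one,
      Real.sqrt_eq_rpow]
  have hsm := Real.sqrt_pos.2 hm
  have hsk := Real.sqrt_pos.2 hk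
  rw [h32, Real.sqrt_mul hk.le]
  field_simp
  nth_rewrite 1 [← Real.sq_sqrt hk.le]
  ring

section Bernoulli

variable {Ω ι : Type*} [MeasurableSpace Ω] {μ : Measure Ω}

lemma integral_eq_of_zero_or_one {f : Ω → ℝ} (hf : Measurable f) (h01 : ∀ ω, f ω = 0 ∨ f ω = 1)
    {r : ℝ} (hr : 0 ≤ r) (hμ : μ {ω | f ω = 1} = ENNReal.ofReal r) : ∫ ω, f ω ∂μ = r := by
  have hind : (fun ω => f ω) = {ω | f ω = 1}.indicator 1 := by
    ext ω
    rcases h01 ω with h | h <;> simp [h]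
  have hmeas : MeasurableSet {ω | f ω = 1} := hf (measurableSet_singleton 1)
  rw [hind, integral_indicator_one hmeas, measureReal_def, hμ, ENNReal.toReal_ofReal hr]

lemma ProbabilityTheory.iIndepFun.integral_finset_prod {Z : ι → Ω → ℝ} (hZ : iIndepFun Z μ)
    (hmeas : ∀ i, Measurable (Z i)) (s : Finset ι) :
    ∫ ω, ∏ i ∈ s, Z i ω ∂μ = ∏ i ∈ s, ∫ ω, Z i ω ∂μ := by
  induction s using Finset.induction_on with
  | empty => have := hZ.isProbabilityMeasure; simp
  | insert a s ha ih =>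
    have hind : IndepFun (Z a) (∏ j ∈ s, Z j) μ :=
      (hZ.indepFun_finsetProd_of_notMem hmeas ha).symm
    have := hind.integral_mul_eq_mul_integral (hmeas a).aestronglyMeasurable
      (Finset.prod_induction _ Measurable (fun _ _ => Measurable.mul) measurable_one
        fun i _ => hmeas i).aestronglyMeasurable
    simp only [prod_insert ha, ← ih]
    simpa [prod_apply] using this

lemma variance_sum_mul_prod_of_iIndepFun {τ : Type*} [Fintype τ] [DecidableEq ι]
    {Z : ι → Ω → ℝ} (hZ : iIndepFun Z μ) (hmeas : ∀ i, Measurable (Z i))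
    (h01 : ∀ i ω, Z i ω = 0 ∨ Z i ω = 1) (c : τ → ℝ) (S : τ → Finset ι) :
    Var[fun ω => ∑ T, c T * ∏ i ∈ S T, Z i ω; μ] =
      ∑ T, ∑ T', c T * c T' * bernoulliCov (fun i => ∫ ω, Z i ω ∂μ) (S T) (S T') := by
  have := hZ.isProbabilityMeasure
  have hprod_meas (s : Finset ι) : Measurable fun ω => ∏ i ∈ s, Z i ω :=
    measurable_prod s fun i _ => hmeas i
  have hprod_memLp (s : Finset ι) : MemLp (fun ω => ∏ i ∈ s, Z i ω) 2 μ := by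
    refine MemLp.of_bound (hprod_meas s).aestronglyMeasurable 1 (ae_of_all _ fun ω => ?_)
    rw [Real.norm_eq_abs, abs_prod]
    exact prod_le_one (fun i _ => abs_nonneg _) fun i _ => by
      rcases h01 i ω with h | h <;> simp [h]
  have hcov (s t : Finset ι) : cov[fun ω => ∏ i ∈ s, Z i ω, fun ω => ∏ i ∈ t, Z i ω; μ] =
      bernoulliCov (fun i => ∫ ω, Z i ω ∂μ) s t := by
    have hmul : ((fun ω => ∏ i ∈ s, Z i ω) * fun ω => ∏ i ∈ t, Z i ω) =
        fun ω => ∏ i ∈ s ∪ t, Z i ω := by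
      ext ω
      exact prod_mul_prod_eq_prod_union_of_mul_self
        (fun i => by rcases h01 i ω with h | h <;> simp [h]) s t
    rw [covariance_eq_sub (hprod_memLp s) (hprod_memLp t), hmul,
      hZ.integral_finset_prod hmeas, hZ.integral_finset_prod hmeas,
      hZ.integral_finset_prod hmeas, bernoulliCov]
  rw [← covariance_self (Measurable.aemeasurable (by fun_prop)),
    covariance_fun_sum_fun_sum (fun T => (hprod_memLp (S T)).const_mul (c T))
      (fun T => (hprod_memLp (S T)).const_mul (c T))]
  simp only [covariance_const_mul_left, covariance_const_mul_right, hcov]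
  exact sum_congr rfl fun T _ => sum_congr rfl fun T' _ => by ring

end Bernoulli

section Stream

variable {V : Type*} {m : ℕ} {σ : Fin m → Sym2 V}

def IsTriangle (σ : Fin m → Sym2 V) (u v w : V) : Prop :=
  s(u, v) ∈ Set.range σ ∧ s(u, w) ∈ Set.range σ ∧ s(v, w) ∈ Set.range σ

def EdgeTriangleBound (σ : Fin m → Sym2 V) (ΔE : ℕ) : Prop :=
  ∀ x y : V, s(x, y) ∈ Set.range σ →
    Nat.card {z : V // s(x, z) ∈ Set.range σ ∧ s(y, z) ∈ Set.range σ} ≤ ΔE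

lemma IsTriangle.swap {u v w : V} (h : IsTriangle σ u v w) : IsTriangle σ u w v :=
  ⟨h.2.1, h.1, Sym2.eq_swap ▸ h.2.2⟩

variable [DecidableEq V]

lemma pos_apply (hinj : Function.Injective σ) (i : Fin m) : pos σ (σ i) = i := by
  have h : ∃ j, σ j = σ i := ⟨i, rfl⟩
  rw [pos, dif_pos h, hinj h.choose_spec]

lemma IsCanonTri.isTriangle {u v w : V} (h : IsCanonTri σ u v w) : IsTriangle σ u v w :=
  ⟨h.1, h.2.1, h.2.2.1⟩

lemma IsCanonTri.ne (hsimple : ∀ t, ¬(σ t).IsDiag) {u v w : V} (h : IsCanonTri σ u v w) :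
    v ≠ w := by
  rintro rfl
  obtain ⟨t, ht⟩ := h.2.2.1
  exact hsimple t (ht ▸ Sym2.mk_isDiag_iff.2 rfl)

lemma IsCanonTri.not_swap (hinj : Function.Injective σ) (hsimple : ∀ t, ¬(σ t).IsDiag)
    {u v w : V} (h : IsCanonTri σ u v w) : ¬IsCanonTri σ u w v := by
  intro h'
  obtain ⟨i, hi⟩ := h.1
  obtain ⟨j, hj⟩ := h.2.1
  have hij : i = j := Fin.ext <| by
    rw [← pos_apply hinj i, ← pos_apply hinj j, hi, hj]
    exact le_antisymm h.2.2.2.1 h'.2.2.2.1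
  have hvw : s(u, v) = s(u, w) := by rw [← hi, ← hj, hij]
  exact h.ne hsimple (Sym2.congr_right.1 hvw)

variable {k : ℝ}

lemma tgt_nonneg (hk : 1 ≤ k) (u v w : V) : 0 ≤ tgt σ k u v w := by
  have h0 : 0 ≤ 1 - 1 / k := sub_nonneg.2 ((div_le_one (by linarith)).2 hk)
  unfold tgt
  split_ifs
  · exact sub_nonneg.2 (pow_le_one₀ h0 (by simp; positivity))
  · exact le_rfl

lemma tgt_le_one (hk : 1 ≤ k) (u v w : V) : tgt σ k u v w ≤ 1 := by
  have h0 : 0 ≤ 1 - 1 / k := sub_nonneg.2 ((div_le_one (by linarith)).2 hk)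
  unfold tgt
  split_ifs
  · exact sub_le_self _ (pow_nonneg h0 _)
  · exact zero_le_one

lemma tgt_le_div (hk : 1 ≤ k) (u v w : V) :
    tgt σ k u v w ≤
      ((if IsCanonTri σ u v w then degb σ u v w + degb σ u w v else 0 : ℕ) : ℝ) / k := by
  unfold tgt
  split_ifs
  · have hbern := one_add_mul_sub_le_pow (a := 1 - 1 / k)
      (by linarith [(div_le_one (by linarith : (0 : ℝ) < k)).2 hk])
      (degb σ u v w + degb σ u w v)
    have hlin : ((degb σ u v w + degb σ u w v : ℕ) : ℝ) * (1 - 1 / k - 1) =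
        -((degb σ u v w + degb σ u w v : ℕ) / k) := by ring
    linarith
  · simp

-- `Sum.inl u` indexes `g u` and `Sum.inr d` indexes `h d`.
def triangleVars (T : V × V × V) : Finset (V ⊕ V × V) :=
  {Sum.inl T.1, Sum.inr (T.1, T.2.1), Sum.inr (T.1, T.2.2)}

lemma sum_mul_eq_sum_mul_prod_triangleVars [Fintype V] (c : V → V → V → ℝ)
    {Z : V ⊕ V × V → ℝ} (hZ : ∀ i, Z i = 0 ∨ Z i = 1) :
    ∑ u, ∑ v, ∑ w, c u v w * Z (Sum.inl u) * Z (Sum.inr (u, v)) * Z (Sum.inr (u, w)) =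
      ∑ T : V × V × V, c T.1 T.2.1 T.2.2 * ∏ i ∈ triangleVars T, Z i := by
  have hidem (i : V ⊕ V × V) : Z i * Z i = Z i := by rcases hZ i with h | h <;> simp [h]
  simp only [Fintype.sum_prod_type, triangleVars, prod_triple_of_mul_self hidem, mul_assoc]

variable {p q : ℝ} {e : V ⊕ V × V → ℝ}

lemma tgt_mul_bernoulliCov_le (hk : 1 ≤ k) (hp0 : 0 ≤ p) (hp1 : p ≤ 1) (hq0 : 0 ≤ q)
    (hq1 : q ≤ 1) (he_inl : ∀ x, e (Sum.inl x) = p) (he_inr : ∀ d, e (Sum.inr d) = q)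
    (hsimple : ∀ t, ¬(σ t).IsDiag) {u v w : V} (hT : IsCanonTri σ u v w) (v' w' : V) :
    tgt σ k u v' w' * bernoulliCov e (triangleVars (u, v, w)) (triangleVars (u, v', w')) ≤
      p * q ^ 2 * (if IsCanonTri σ u v' w' ∧ (v' ∈ ({v, w} : Finset V) ∨ w' ∈ ({v, w} : Finset V))
        then 1 else 0) + p * q ^ 4 * tgt σ k u v' w' := by
  have he0 : ∀ i, 0 ≤ e i := by rintro (x | d) <;> simpa [he_inl, he_inr]
  have he1 : ∀ i, e i ≤ 1 := by rintro (x | d) <;> simpa [he_inl, he_inr]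
  have hc0 := tgt_nonneg (σ := σ) hk u v' w'
  have hvw := hT.ne hsimple
  by_cases hT' : IsCanonTri σ u v' w'
  · have hv'w' := hT'.ne hsimple
    by_cases hshare : v' ∈ ({v, w} : Finset V) ∨ w' ∈ ({v, w} : Finset V)
    · rw [if_pos ⟨hT', hshare⟩]
      have hD := bernoulliCov_le he0 he1
        (subset_union_left : triangleVars (u, v, w) ⊆ _ ∪ triangleVars (u, v', w'))
      have hval : ∏ i ∈ triangleVars (u, v, w), e i = p * q ^ 2 := by
        simp [triangleVars, hvw, he_inl, he_inr, -mul_eq_mul_left_iff]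
        ring
      have := mul_le_mul_of_nonneg_left (hD.trans_eq hval) hc0
      nlinarith [tgt_le_one (σ := σ) hk u v' w', mul_nonneg hp0 (pow_nonneg hq0 2),
        mul_nonneg (mul_nonneg hp0 (pow_nonneg hq0 4)) hc0]
    · rw [if_neg fun h => hshare h.2]
      simp only [mem_insert, mem_singleton, not_or] at hshare
      obtain ⟨⟨hv'v, hv'w⟩, hw'v, hw'w⟩ := hshare
      have hD := bernoulliCov_le he0 he1
        (r := {Sum.inl u, Sum.inr (u, v), Sum.inr (u, w), Sum.inr (u, v'), Sum.inr (u, w')})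
        (s := triangleVars (u, v, w)) (t := triangleVars (u, v', w'))
        (by intro i; simp [triangleVars]; tauto)
      have hval : ∏ i ∈ ({Sum.inl u, Sum.inr (u, v), Sum.inr (u, w), Sum.inr (u, v'),
          Sum.inr (u, w')} : Finset (V ⊕ V × V)), e i = p * q ^ 4 := by
        simp [hvw, hv'w', Ne.symm hv'v, Ne.symm hv'w, Ne.symm hw'v, Ne.symm hw'w,
          he_inl, he_inr, -mul_eq_mul_left_iff]
        ring
      nlinarith [mul_le_mul_of_nonneg_left (hD.trans_eq hval) hc0]
  · simp only [tgt, zero_mul, hT', false_and, if_false, mul_zero, add_zero, le_refl]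

variable [Fintype V] {ΔE : ℕ}

lemma card_triangle_pairs_le (hΔE : EdgeTriangleBound σ ΔE) (u : V) (A : Finset V) :
    #{xz : V × V | xz.1 ∈ A ∧ IsTriangle σ u xz.1 xz.2} ≤ ΔE * #A := by
  refine card_le_mul_card_image_of_maps_to (f := Prod.fst)
    (t := A) (fun xz hxz => (mem_filter.1 hxz).2.1) ΔE fun x _ => ?_
  by_cases hux : s(u, x) ∈ Set.range σ
  · calc _ ≤ #{z : V | s(u, z) ∈ Set.range σ ∧ s(x, z) ∈ Set.range σ} := by
          refine card_le_card_of_injOn Prod.snd ?_ ?_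
          · rintro ⟨x', z⟩ hxz
            simp only [coe_filter, mem_filter, mem_univ, true_and] at hxz ⊢
            obtain ⟨⟨-, -, huz, hxz⟩, rfl⟩ := hxz
            exact ⟨huz, hxz⟩
          · rintro ⟨x₁, z₁⟩ h₁ ⟨x₂, z₂⟩ h₂ hz
            simp only [coe_filter, mem_filter, mem_univ, true_and] at h₁ h₂
            exact Prod.ext (h₁.2.trans h₂.2.symm) hz
      _ ≤ ΔE := by
          simpa only [Nat.card_eq_fintype_card, Fintype.card_subtype] using hΔE u x hux
  · refine (card_eq_zero.2 ?_).trans_le (Nat.zero_le ΔE)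
    rw [filter_eq_empty_iff]
    rintro ⟨x', z⟩ hxz rfl
    exact hux (mem_filter.1 hxz).2.2.1

lemma card_canon_add_card_canon_swap_le (hinj : Function.Injective σ)
    (hsimple : ∀ t, ¬(σ t).IsDiag) (u : V) (P : V → V → Prop) [∀ v w, Decidable (P v w)] :
    #{vw : V × V | IsCanonTri σ u vw.1 vw.2 ∧ P vw.1 vw.2} +
        #{vw : V × V | IsCanonTri σ u vw.1 vw.2 ∧ P vw.2 vw.1} ≤
      #{vw : V × V | IsTriangle σ u vw.1 vw.2 ∧ P vw.1 vw.2} := by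
  have hswap : #{vw : V × V | IsCanonTri σ u vw.1 vw.2 ∧ P vw.2 vw.1} =
      #{vw : V × V | IsCanonTri σ u vw.2 vw.1 ∧ P vw.1 vw.2} :=
    card_equiv (Equiv.prodComm V V) (by simp)
  rw [hswap, ← card_union_of_disjoint]
  · refine card_le_card fun vw hvw => ?_
    simp only [mem_union, mem_filter, mem_univ, true_and] at hvw ⊢
    rcases hvw with ⟨h, hP⟩ | ⟨h, hP⟩
    exacts [⟨h.isTriangle, hP⟩, ⟨h.isTriangle.swap, hP⟩]
  · exact disjoint_filter.2 fun vw _ h h' => h.1.not_swap hinj hsimple h'.1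

lemma card_canon_touching_le (hinj : Function.Injective σ) (hsimple : ∀ t, ¬(σ t).IsDiag)
    (hΔE : EdgeTriangleBound σ ΔE) (u : V) (A : Finset V) :
    #{vw : V × V | IsCanonTri σ u vw.1 vw.2 ∧ (vw.1 ∈ A ∨ vw.2 ∈ A)} ≤ ΔE * #A :=
  calc #{vw : V × V | IsCanonTri σ u vw.1 vw.2 ∧ (vw.1 ∈ A ∨ vw.2 ∈ A)}
      ≤ #{vw : V × V | IsCanonTri σ u vw.1 vw.2 ∧ vw.1 ∈ A} +
          #{vw : V × V | IsCanonTri σ u vw.1 vw.2 ∧ vw.2 ∈ A} := by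
        simpa only [and_or_left, filter_or] using card_union_le _ _
    _ ≤ #{vw : V × V | IsTriangle σ u vw.1 vw.2 ∧ vw.1 ∈ A} :=
        card_canon_add_card_canon_swap_le hinj hsimple u fun v _ => v ∈ A
    _ ≤ ΔE * #A := by
        simpa only [and_comm] using card_triangle_pairs_le hΔE u A

lemma sum_degb_le (hinj : Function.Injective σ) (hsimple : ∀ t, ¬(σ t).IsDiag)
    (hΔE : EdgeTriangleBound σ ΔE) (u : V) :
    ∑ vw : V × V, (if IsCanonTri σ u vw.1 vw.2 then
      degb σ u vw.1 vw.2 + degb σ u vw.2 vw.1 else 0) ≤ 2 * ΔE * m := by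
  set R : Fin m → V → V → Prop :=
    fun t v w => pos σ s(u, v) < t ∧ (t : ℕ) < pos σ s(v, w) ∧ v ∈ σ t
  calc _ = ∑ vw ∈ {vw : V × V | IsCanonTri σ u vw.1 vw.2},
        (#{t | R t vw.1 vw.2} + #{t | R t vw.2 vw.1}) := by
        rw [sum_filter]; rfl
    _ = ∑ t, (#{vw : V × V | IsCanonTri σ u vw.1 vw.2 ∧ R t vw.1 vw.2} +
          #{vw : V × V | IsCanonTri σ u vw.1 vw.2 ∧ R t vw.2 vw.1}) := by
        rw [sum_add_distrib, sum_add_distrib]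
        congr 1
        · exact (sum_card_bipartiteAbove_eq_sum_card_bipartiteBelow
            (s := {vw : V × V | IsCanonTri σ u vw.1 vw.2}) (t := univ)
            (r := fun (vw : V × V) (t : Fin m) => R t vw.1 vw.2)).trans
            (by simp only [bipartiteBelow, filter_filter])
        · exact (sum_card_bipartiteAbove_eq_sum_card_bipartiteBelow
            (s := {vw : V × V | IsCanonTri σ u vw.1 vw.2}) (t := univ)
            (r := fun (vw : V × V) (t : Fin m) => R t vw.2 vw.1)).trans
            (by simp only [bipartiteBelow, filter_filter])
    _ ≤ ∑ t, #{vw : V × V | IsTriangle σ u vw.1 vw.2 ∧ R t vw.1 vw.2} :=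
        sum_le_sum fun t _ => card_canon_add_card_canon_swap_le hinj hsimple u (R t)
    _ ≤ ∑ _t : Fin m, ΔE * 2 := by
        refine sum_le_sum fun t _ => le_trans (card_le_card ?_)
          ((card_triangle_pairs_le hΔE u (σ t).toFinset).trans_eq
            (by rw [Sym2.card_toFinset_of_not_isDiag _ (hsimple t)]))
        intro vw hvw
        simp only [mem_filter, mem_univ, true_and, Sym2.mem_toFinset] at hvw ⊢
        exact ⟨hvw.2.2.2, hvw.1⟩
    _ = 2 * ΔE * m := by simp only [sum_const, card_univ, Fintype.card_fin, smul_eq_mul]; ring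

lemma sum_tgt_le (hk : 1 ≤ k) (hinj : Function.Injective σ) (hsimple : ∀ t, ¬(σ t).IsDiag)
    (hΔE : EdgeTriangleBound σ ΔE) (u : V) :
    ∑ vw : V × V, tgt σ k u vw.1 vw.2 ≤ 2 * ΔE * m / k :=
  calc ∑ vw : V × V, tgt σ k u vw.1 vw.2
      ≤ ∑ vw : V × V, ((if IsCanonTri σ u vw.1 vw.2 then
          degb σ u vw.1 vw.2 + degb σ u vw.2 vw.1 else 0 : ℕ) : ℝ) / k :=
        sum_le_sum fun vw _ => tgt_le_div hk u vw.1 vw.2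
    _ ≤ 2 * ΔE * m / k := by
        rw [← sum_div, ← Nat.cast_sum]
        gcongr
        exact_mod_cast sum_degb_le hinj hsimple hΔE u

lemma sum_tgt_mul_bernoulliCov_le (hk : 1 ≤ k) (hp0 : 0 ≤ p) (hp1 : p ≤ 1) (hq0 : 0 ≤ q)
    (hq1 : q ≤ 1) (he_inl : ∀ x, e (Sum.inl x) = p) (he_inr : ∀ d, e (Sum.inr d) = q)
    (hinj : Function.Injective σ) (hsimple : ∀ t, ¬(σ t).IsDiag)
    (hΔE : EdgeTriangleBound σ ΔE) {u v w : V} (hT : IsCanonTri σ u v w) :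
    ∑ T' : V × V × V, tgt σ k T'.1 T'.2.1 T'.2.2 *
        bernoulliCov e (triangleVars (u, v, w)) (triangleVars T') ≤
      p * q ^ 2 * (ΔE * 2) + p * q ^ 4 * (2 * ΔE * m / k) := by
  have hother (u' : V) (hu' : u' ≠ u) (vw' : V × V) :
      bernoulliCov e (triangleVars (u, v, w)) (triangleVars (u', vw')) = 0 :=
    bernoulliCov_eq_zero e <| by simp [triangleVars, hu']
  rw [Fintype.sum_prod_type, sum_eq_single u (fun u' _ hu' => sum_eq_zero fun vw' _ => by
    rw [hother u' hu', mul_zero]) (by simp)]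
  calc _ ≤ ∑ vw' : V × V, (p * q ^ 2 * (if IsCanonTri σ u vw'.1 vw'.2 ∧
          (vw'.1 ∈ ({v, w} : Finset V) ∨ vw'.2 ∈ ({v, w} : Finset V)) then 1 else 0) +
        p * q ^ 4 * tgt σ k u vw'.1 vw'.2) :=
        sum_le_sum fun vw' _ => tgt_mul_bernoulliCov_le hk hp0 hp1 hq0 hq1 he_inl he_inr
          hsimple hT vw'.1 vw'.2
    _ ≤ p * q ^ 2 * (ΔE * 2) + p * q ^ 4 * (2 * ΔE * m / k) := by
        rw [sum_add_distrib, ← mul_sum, ← mul_sum, sum_boole]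
        gcongr
        · exact_mod_cast (card_canon_touching_le hinj hsimple hΔE u {v, w}).trans
            (Nat.mul_le_mul_left _ card_le_two)
        · exact sum_tgt_le hk hinj hsimple hΔE u

lemma sum_sum_tgt_mul_bernoulliCov_le (hk : 1 ≤ k) (hm : (0 : ℝ) < m) (hp0 : 0 ≤ p)
    (hp1 : p ≤ 1) (hq0 : 0 ≤ q) (hq1 : q ≤ 1) (hq2 : q ^ 2 = k / m)
    (he_inl : ∀ x, e (Sum.inl x) = p) (he_inr : ∀ d, e (Sum.inr d) = q)
    (hinj : Function.Injective σ) (hsimple : ∀ t, ¬(σ t).IsDiag)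
    (hΔE : EdgeTriangleBound σ ΔE) :
    ∑ T : V × V × V, ∑ T' : V × V × V, tgt σ k T.1 T.2.1 T.2.2 * tgt σ k T'.1 T'.2.1 T'.2.2 *
        bernoulliCov e (triangleVars T) (triangleVars T') ≤
      4 * ΔE * (p * q ^ 2) * ∑ T : V × V × V, tgt σ k T.1 T.2.1 T.2.2 := by
  rw [mul_sum]
  refine sum_le_sum fun ⟨u, v, w⟩ _ => ?_
  calc ∑ T' : V × V × V, tgt σ k u v w * tgt σ k T'.1 T'.2.1 T'.2.2 *
        bernoulliCov e (triangleVars (u, v, w)) (triangleVars T')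
      = tgt σ k u v w * ∑ T' : V × V × V, tgt σ k T'.1 T'.2.1 T'.2.2 *
        bernoulliCov e (triangleVars (u, v, w)) (triangleVars T') := by
        rw [mul_sum]
        simp only [mul_assoc]
    _ ≤ tgt σ k u v w * (4 * ΔE * (p * q ^ 2)) := by
        by_cases hT : IsCanonTri σ u v w
        · refine mul_le_mul_of_nonneg_left ((sum_tgt_mul_bernoulliCov_le hk hp0 hp1 hq0 hq1
            he_inl he_inr hinj hsimple hΔE hT).trans_eq ?_) (tgt_nonneg hk u v w)
          rw [show q ^ 4 = q ^ 2 * q ^ 2 by ring, hq2]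
          field_simp
          ring
        · simp [tgt, hT]
    _ = 4 * ΔE * (p * q ^ 2) * tgt σ k u v w := mul_comm _ _

end Stream

theorem stmt_14_general {V : Type*} [Fintype V] [DecidableEq V] {m : ℕ}
    (σ : Fin m → Sym2 V)
    (hinj : Function.Injective σ) (hsimple : ∀ t, ¬(σ t).IsDiag)
    (k : ℝ) (hk : 1 ≤ k) (hkm : k ≤ m)
    (ΔE : ℕ)
    (hΔE : ∀ x y : V, s(x, y) ∈ Set.range σ →
      Nat.card {z : V // s(x, z) ∈ Set.range σ ∧ s(y, z) ∈ Set.range σ} ≤ ΔE)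
    {Ω : Type*} [MeasurableSpace Ω] (μ : Measure Ω)
    (p q : ℝ) (hp : p = (Real.sqrt (k * m))⁻¹) (hq : q = Real.sqrt (k / m))
    (g : V → Ω → ℝ) (h : V × V → Ω → ℝ)
    (hgval : ∀ v ω, g v ω = 0 ∨ g v ω = 1)
    (hhval : ∀ d ω, h d ω = 0 ∨ h d ω = 1)
    (hgmeas : ∀ v, Measurable (g v)) (hhmeas : ∀ d, Measurable (h d))
    (hindep : iIndepFun (Sum.elim g h) μ)
    (hgp : ∀ v : V, μ {ω | g v ω = 1} = ENNReal.ofReal p)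
    (hhq : ∀ d : V × V, μ {ω | h d ω = 1} = ENNReal.ofReal q)
    (X : Ω → ℝ)
    (hX : ∀ ω, X ω = ∑ u : V, ∑ v : V, ∑ w : V,
      tgt σ k u v w * g u ω * h (u, v) ω * h (u, w) ω) :
    variance X μ ≤
      4 * (Real.sqrt k / (m : ℝ) ^ (3 / 2 : ℝ)) * ΔE *
        (∑ u : V, ∑ v : V, ∑ w : V, tgt σ k u v w) := by
  have hm0 : (0 : ℝ) < m := by linarith
  have hk0 : (0 : ℝ) < k := by linarith
  have hp0 : 0 ≤ p := hp ▸ inv_nonneg.2 (Real.sqrt_nonneg _)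
  have hp1 : p ≤ 1 := hp ▸ inv_le_one_of_one_le₀ (Real.one_le_sqrt.2 (by nlinarith))
  have hq0 : 0 ≤ q := hq ▸ Real.sqrt_nonneg _
  have hq1 : q ≤ 1 := hq ▸ Real.sqrt_le_one.2 (div_le_one_of_le₀ hkm hm0.le)
  have hq2 : q ^ 2 = k / m := hq ▸ Real.sq_sqrt (by positivity)
  set Z : V ⊕ V × V → Ω → ℝ := Sum.elim g h
  have hZ01 : ∀ i ω, Z i ω = 0 ∨ Z i ω = 1 := by
    rintro (v | d) ω
    exacts [hgval v ω, hhval d ω]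
  have hZmeas : ∀ i, Measurable (Z i) := by
    rintro (v | d)
    exacts [hgmeas v, hhmeas d]
  have he_inl (v : V) : ∫ ω, Z (Sum.inl v) ω ∂μ = p :=
    integral_eq_of_zero_or_one (hgmeas v) (hgval v) hp0 (hgp v)
  have he_inr (d : V × V) : ∫ ω, Z (Sum.inr d) ω ∂μ = q :=
    integral_eq_of_zero_or_one (hhmeas d) (hhval d) hq0 (hhq d)
  have hXsum : X = fun ω => ∑ T : V × V × V,
      tgt σ k T.1 T.2.1 T.2.2 * ∏ i ∈ triangleVars T, Z i ω :=
    funext fun ω => (hX ω).trans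
      (sum_mul_eq_sum_mul_prod_triangleVars (tgt σ k) (Z := (Z · ω)) (hZ01 · ω))
  have hpq : p * q ^ 2 = Real.sqrt k / (m : ℝ) ^ (3 / 2 : ℝ) := by
    rw [hp, hq2]
    exact inv_sqrt_mul_mul_div_eq hk0 hm0
  rw [hXsum, variance_sum_mul_prod_of_iIndepFun hindep hZmeas hZ01]
  refine (sum_sum_tgt_mul_bernoulliCov_le hk hm0 hp0 hp1 hq0 hq1 hq2 he_inl he_inr hinj hsimple
    hΔE).trans_eq ?_
  rw [hpq]
  simp only [Fintype.sum_prod_type]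
  ring

/-- With `1 ≤ k ≤ m`, every edge in at most `Δ_E ≥ 1` triangles, `p = 1/√(km)`,
`q = √(k/m)`, and jointly independent Bernoulli(p) variables `g_v` and Bernoulli(q)
variables `h_{(u,v)}`, the estimator
`X = Σ_{(u,v,w)} t^{>k}_{uvw} g_u h_{(u,v)} h_{(u,w)}` satisfies
`Var(X) ≤ 4 (√k / m^{3/2}) Δ_E T^{>k}`. -/
theorem stmt_14 {V : Type*} [Fintype V] [DecidableEq V] {m : ℕ} (hm : 1 ≤ m)
    (σ : Fin m → Sym2 V)
    (hinj : Function.Injective σ) (hsimple : ∀ t, ¬(σ t).IsDiag)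
    (k : ℝ) (hk : 1 ≤ k) (hkm : k ≤ m)
    (ΔE : ℕ) (hΔE1 : 1 ≤ ΔE)
    (hΔE : ∀ x y : V, s(x, y) ∈ Set.range σ →
      Nat.card {z : V // s(x, z) ∈ Set.range σ ∧ s(y, z) ∈ Set.range σ} ≤ ΔE)
    {Ω : Type*} [MeasurableSpace Ω] (μ : Measure Ω) [IsProbabilityMeasure μ]
    (p q : ℝ) (hp : p = (Real.sqrt (k * m))⁻¹) (hq : q = Real.sqrt (k / m))
    (g : V → Ω → ℝ) (h : V × V → Ω → ℝ)
    (hgval : ∀ v ω, g v ω = 0 ∨ g v ω = 1)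
    (hhval : ∀ d ω, h d ω = 0 ∨ h d ω = 1)
    (hgmeas : ∀ v, Measurable (g v)) (hhmeas : ∀ d, Measurable (h d))
    (hindep : iIndepFun (Sum.elim g h) μ)
    (hgp : ∀ v : V, μ {ω | g v ω = 1} = ENNReal.ofReal p)
    (hhq : ∀ d : V × V, μ {ω | h d ω = 1} = ENNReal.ofReal q)
    (X : Ω → ℝ)
    (hX : ∀ ω, X ω = ∑ u : V, ∑ v : V, ∑ w : V,
      tgt σ k u v w * g u ω * h (u, v) ω * h (u, w) ω) :
    variance X μ ≤
      4 * (Real.sqrt k / (m : ℝ) ^ (3 / 2 : ℝ)) * ΔE *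
        (∑ u : V, ∑ v : V, ∑ w : V, tgt σ k u v w) :=
  stmt_14_general σ hinj hsimple k hk hkm ΔE hΔE μ p q hp hq g h hgval hhval hgmeas hhmeas hindep
    hgp hhq X hX
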